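/- Let G be a free product of cyclic groups (finite or infinite), and let g be a nontrivial element of the commutator subgroup [G,G] that is not conjugate to its inverse g⁻¹. Then scl_G(g) ≥ 1/12. (This is the single-element case of the paper's proposition that every integral chain which is nontrivial in B₁^H(G) has stable commutator length at least 1/12 in a free product of cyclic groups.) -/

import Mathlib

/-!
Conjugate `g` to a cyclically reduced word `w` of length `L`; since the factors are abelian, a
single letter cannot lie in the commutator subgroup, so `w` has at least two letters. Brooks'
counting quasimorphism `φ` counts the windows of the normal form that are cyclic conjugates of
`w`, minus those that are cyclic conjugates of `w⁻¹`. Its defect is at most `3L`: the normal forms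
of `x`, `y` and `xy` are glued from three common pieces with at most one letter in between, and
each junction creates or destroys at most `L` windows. As `g` is not conjugate to `g⁻¹`, no window
of `wⁿ` is a conjugate of `w⁻¹`, so the homogenization of `φ` equals `L` at `g`. A homogeneous
quasimorphism of defect `6L` is at most `6L` on commutators, so writing `gⁿ` as a product of
`k` commutators forces `nL ≤ 12kL`.
-/

open scoped ENNReal commutatorElement

section SCL

variable {G : Type*} [Group G]

/-- `g` is a product of `k` commutators. -/
def IsProdOfCommutators (g : G) (k : ℕ) : Prop :=
  ∃ a b : Fin k → G, g = (List.ofFn fun i => ⁅a i, b i⁆).prod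

/-- The commutator length of `g`: the least number of commutators whose product is `g`. -/
noncomputable def commutatorLength (g : G) : ℕ :=
  sInf {k | IsProdOfCommutators g k}

/-- The stable commutator length of `g`, with values in `[0,∞]` (by Fekete's lemma the
limit `lim_n cl(gⁿ)/n` equals the infimum below). -/
noncomputable def scl (g : G) : ℝ≥0∞ :=
  ⨅ (n : ℕ+) (_ : ∃ k, IsProdOfCommutators (g ^ (n : ℕ)) k),
    (commutatorLength (g ^ (n : ℕ)) : ℝ≥0∞) / ((n : ℕ) : ℝ≥0∞)

end SCL

open Filter Topology

lemma tendsto_div_natCast_of_abs_sub_le {u v : ℕ → ℝ} {a C : ℝ} (huv : ∀ n, |u n - v n| ≤ C)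
    (hv : Tendsto (fun n => v n / n) atTop (𝓝 a)) : Tendsto (fun n => u n / n) atTop (𝓝 a) := by
  have hdiff : Tendsto (fun n : ℕ => (u n - v n) / n) atTop (𝓝 0) := by
    refine squeeze_zero_norm (fun n => ?_) (tendsto_const_div_atTop_nhds_zero_nat C)
    rw [Real.norm_eq_abs, abs_div, Nat.abs_cast]
    exact div_le_div_of_nonneg_right (huv n) n.cast_nonneg
  convert hv.add hdiff using 1
  · ext n; ring
  · rw [add_zero]

section Quasimorphism

variable {H : Type*} [Group H]

def IsQuasimorphism (φ : H → ℝ) (D : ℝ) : Prop :=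
  ∀ x y, |φ (x * y) - φ x - φ y| ≤ D

noncomputable def homogenization (φ : H → ℝ) (x : H) : ℝ :=
  limUnder atTop fun n : ℕ => φ (x ^ n) / n

namespace IsQuasimorphism

variable {φ : H → ℝ} {D : ℝ} (hφ : IsQuasimorphism φ D)
include hφ

lemma nonneg : 0 ≤ D := (abs_nonneg _).trans (hφ 1 1)

lemma succ_mul_sub_le (x : H) (n : ℕ) : (n + 1 : ℝ) * (φ x - D) + D ≤ φ (x ^ (n + 1)) := by
  induction n with
  | zero => simp
  | succ n ih =>
    have h := (abs_le.1 (hφ (x ^ (n + 1)) x)).1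
    rw [← pow_succ] at h
    push_cast at ih ⊢
    linarith

lemma tendsto_homogenization (x : H) :
    Tendsto (fun n : ℕ => φ (x ^ n) / n) atTop (𝓝 (homogenization φ x)) := by
  have hsub : Subadditive fun n => φ (x ^ n) + D := fun m n => by
    have h := (abs_le.1 (hφ (x ^ m) (x ^ n))).2
    rw [← pow_add] at h
    linarith
  have hbdd : BddBelow (Set.range fun n : ℕ => (φ (x ^ n) + D) / n) := by
    refine ⟨min 0 (φ x - D), ?_⟩
    rintro r ⟨_ | n, rfl⟩
    · simp
    · have hn : (0 : ℝ) < n + 1 := by positivity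
      refine (min_le_right _ _).trans ?_
      show φ x - D ≤ (φ (x ^ (n + 1)) + D) / ((n + 1 : ℕ) : ℝ)
      rw [Nat.cast_succ, le_div_iff₀ hn]
      nlinarith [hφ.succ_mul_sub_le x n, hφ.nonneg]
  have hlim := tendsto_div_natCast_of_abs_sub_le (v := fun n => φ (x ^ n) + D) (C := D)
    (fun n => by rw [sub_add_cancel_left, abs_neg, abs_of_nonneg hφ.nonneg])
    (hsub.tendsto_lim hbdd)
  exact tendsto_nhds_limUnder ⟨_, hlim⟩

lemma homogenization_one : homogenization φ (1 : H) = 0 := by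
  refine tendsto_nhds_unique (hφ.tendsto_homogenization 1) ?_
  simpa only [one_pow] using tendsto_const_div_atTop_nhds_zero_nat (φ 1)

lemma homogenization_pow (x : H) (m : ℕ) :
    homogenization φ (x ^ m) = m * homogenization φ x := by
  rcases Nat.eq_zero_or_pos m with rfl | hm
  · rw [pow_zero, hφ.homogenization_one, Nat.cast_zero, zero_mul]
  have hmul : Tendsto (fun n : ℕ => m * n) atTop atTop :=
    tendsto_id.const_mul_atTop' hm
  refine tendsto_nhds_unique (hφ.tendsto_homogenization (x ^ m)) ?_
  convert ((hφ.tendsto_homogenization x).comp hmul).const_mul (m : ℝ) using 2 with n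
  have hm0 : (m : ℝ) ≠ 0 := by positivity
  simp only [Function.comp_apply, ← pow_mul, Nat.cast_mul]
  rw [mul_div_assoc', mul_div_mul_left _ _ hm0]

lemma sub_le_homogenization (x : H) : φ x - D ≤ homogenization φ x := by
  refine ge_of_tendsto (hφ.tendsto_homogenization x) ?_
  filter_upwards [eventually_ge_atTop 1] with n hn
  obtain ⟨k, rfl⟩ := Nat.exists_eq_add_of_le' hn
  have hk : (0 : ℝ) < k + 1 := by positivity
  rw [Nat.cast_succ, le_div_iff₀ hk]
  nlinarith [hφ.succ_mul_sub_le x k, hφ.nonneg]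

lemma homogenization_conj (z y : H) : homogenization φ (z * y * z⁻¹) = homogenization φ y := by
  refine tendsto_nhds_unique (hφ.tendsto_homogenization _) ?_
  refine tendsto_div_natCast_of_abs_sub_le (C := |φ z| + |φ z⁻¹| + 2 * D) (fun n => ?_)
    (hφ.tendsto_homogenization y)
  have h₁ := abs_le.1 (hφ z (y ^ n * z⁻¹))
  have h₂ := abs_le.1 (hφ (y ^ n) z⁻¹)
  rw [← mul_assoc] at h₁
  rw [conj_pow, abs_le]
  constructor <;> linarith [neg_abs_le (φ z), le_abs_self (φ z), neg_abs_le (φ z⁻¹),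
    le_abs_self (φ z⁻¹)]

lemma homogenization_inv (x : H) : homogenization φ x⁻¹ = -homogenization φ x := by
  refine tendsto_nhds_unique (hφ.tendsto_homogenization _) ?_
  refine tendsto_div_natCast_of_abs_sub_le (v := fun n => -φ (x ^ n)) (C := |φ 1| + D)
    (fun n => ?_) (by simpa only [neg_div] using (hφ.tendsto_homogenization x).neg)
  have h := abs_le.1 (hφ (x ^ n) (x ^ n)⁻¹)
  rw [mul_inv_cancel] at h
  rw [inv_pow, abs_le]
  constructor <;> linarith [neg_abs_le (φ 1), le_abs_self (φ 1)]

-- `(xy)ⁿ x⁻ⁿ` is the product of the conjugates `xᵏ y x⁻ᵏ` (`k = 1, …, n`), on each of which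
-- `φ` is at most `homogenization φ y + D`.
lemma pow_mul_inv_pow_le (x y : H) (n : ℕ) :
    φ ((x * y) ^ n * (x ^ n)⁻¹) ≤ φ 1 + n * (homogenization φ y + 2 * D) := by
  induction n with
  | zero => simp
  | succ n ih =>
    have hsplit : (x * y) ^ (n + 1) * (x ^ (n + 1))⁻¹
        = (x * y) ^ n * (x ^ n)⁻¹ * (x ^ (n + 1) * y * (x ^ (n + 1))⁻¹) := by
      rw [pow_succ (x * y) n, pow_succ x n]
      group
    have hconj := hφ.sub_le_homogenization (x ^ (n + 1) * y * (x ^ (n + 1))⁻¹)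
    rw [hφ.homogenization_conj] at hconj
    have h := (abs_le.1 (hφ ((x * y) ^ n * (x ^ n)⁻¹) (x ^ (n + 1) * y * (x ^ (n + 1))⁻¹))).2
    rw [hsplit, Nat.cast_succ]
    linarith

lemma homogenization_mul_le (x y : H) :
    homogenization φ (x * y) ≤ homogenization φ x + homogenization φ y + 2 * D := by
  have hlim : Tendsto (fun n : ℕ => (φ 1 + D) / n + (homogenization φ y + 2 * D) + φ (x ^ n) / n)
      atTop (𝓝 (0 + (homogenization φ y + 2 * D) + homogenization φ x)) :=
    ((tendsto_const_div_atTop_nhds_zero_nat _).add tendsto_const_nhds).add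
      (hφ.tendsto_homogenization x)
  have hle := le_of_tendsto_of_tendsto (hφ.tendsto_homogenization (x * y)) hlim ?_
  · linarith
  filter_upwards [eventually_ge_atTop 1] with n hn
  have hn0 : (0 : ℝ) < n := by exact_mod_cast hn
  have h := (abs_le.1 (hφ ((x * y) ^ n * (x ^ n)⁻¹) (x ^ n))).2
  rw [inv_mul_cancel_right] at h
  have key := hφ.pow_mul_inv_pow_le x y n
  rw [div_le_iff₀ hn0]
  field_simp
  linarith

lemma homogenization_commutatorElement_le (a b : H) : homogenization φ ⁅a, b⁆ ≤ 2 * D := by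
  have h := hφ.homogenization_mul_le (a * b * a⁻¹) b⁻¹
  rw [hφ.homogenization_conj, hφ.homogenization_inv, ← commutatorElement_def] at h
  linarith

lemma homogenization_list_prod_le (l : List H) (hl : ∀ c ∈ l, homogenization φ c ≤ 2 * D) :
    homogenization φ l.prod ≤ 4 * l.length * D := by
  induction l with
  | nil => simp [hφ.homogenization_one]
  | cons c l ih =>
    rw [List.prod_cons, List.length_cons, Nat.cast_succ]
    have := hφ.homogenization_mul_le c l.prod
    linarith [hl c List.mem_cons_self, ih fun d hd => hl d (List.mem_cons_of_mem _ hd)]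

lemma nat_mul_homogenization_le {g : H} {n k : ℕ} (h : IsProdOfCommutators (g ^ n) k) :
    n * homogenization φ g ≤ 4 * k * D := by
  obtain ⟨a, b, hab⟩ := h
  rw [← hφ.homogenization_pow, hab]
  have hcomm : ∀ c ∈ List.ofFn (fun i => ⁅a i, b i⁆), homogenization φ c ≤ 2 * D := by
    intro c hc
    obtain ⟨i, rfl⟩ := List.mem_ofFn.1 hc
    exact hφ.homogenization_commutatorElement_le _ _
  simpa using hφ.homogenization_list_prod_le _ hcomm

/-- The easy half of Bavard duality. -/
lemma ofReal_homogenization_div_le_scl (hD : 0 < D) (g : H) :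
    ENNReal.ofReal (homogenization φ g / (4 * D)) ≤ scl g := by
  refine le_iInf fun n => le_iInf fun hex => ?_
  have hcl : IsProdOfCommutators (g ^ (n : ℕ)) (commutatorLength (g ^ (n : ℕ))) := Nat.sInf_mem hex
  have hn : (0 : ℝ) < (n : ℕ) := by exact_mod_cast n.pos
  rw [ENNReal.le_div_iff_mul_le (Or.inl (by simp)) (Or.inl (by simp)), ← ENNReal.ofReal_natCast,
    ← ENNReal.ofReal_mul' hn.le, ← ENNReal.ofReal_natCast]
  refine ENNReal.ofReal_le_ofReal ?_
  rw [div_mul_eq_mul_div, div_le_iff₀ (by positivity)]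
  linarith [hφ.nat_mul_homogenization_le hcl]

end IsQuasimorphism

end Quasimorphism

section Windows

variable {α : Type*}

open scoped Classical

noncomputable def windowStarts (L : ℕ) (S : Set (List α)) (l : List α) : Finset ℕ :=
  {i ∈ Finset.range (l.length + 1 - L) | (l.drop i).take L ∈ S}

noncomputable def countWindows (L : ℕ) (S : Set (List α)) (l : List α) : ℕ :=
  (windowStarts L S l).card

variable {L : ℕ} {S : Set (List α)}

lemma mem_windowStarts {l : List α} {i : ℕ} :
    i ∈ windowStarts L S l ↔ i + L ≤ l.length ∧ (l.drop i).take L ∈ S := by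
  rw [windowStarts, Finset.mem_filter, Finset.mem_range]
  exact and_congr_left fun _ => by omega

lemma take_drop_append_of_add_le {a b : List α} {i : ℕ} (h : i + L ≤ a.length) :
    ((a ++ b).drop i).take L = (a.drop i).take L := by
  rw [List.drop_append_of_le_length (by omega), List.take_append_of_le_length]
  rw [List.length_drop]
  omega

lemma take_drop_append_add_length (a b : List α) (i : ℕ) :
    ((a ++ b).drop (a.length + i)).take L = (b.drop i).take L := by
  rw [← List.drop_drop, List.drop_left]

lemma countWindows_add_le_append (hL : 1 ≤ L) (a c b : List α) :
    countWindows L S a + countWindows L S b ≤ countWindows L S (a ++ c ++ b) := by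
  have hsub : windowStarts L S a ∪ (windowStarts L S b).map (addLeftEmbedding (a ++ c).length)
      ⊆ windowStarts L S (a ++ c ++ b) := by
    intro i hi
    simp only [Finset.mem_union, Finset.mem_map, addLeftEmbedding_apply, mem_windowStarts] at hi
    rw [mem_windowStarts]
    rcases hi with hi | ⟨j, hj, rfl⟩
    · rw [List.append_assoc, take_drop_append_of_add_le hi.1]
      exact ⟨by simp only [List.length_append]; omega, hi.2⟩
    · rw [take_drop_append_add_length]
      exact ⟨by simp only [List.length_append] at hj ⊢; omega, hj.2⟩
  have hdisj : Disjoint (windowStarts L S a)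
      ((windowStarts L S b).map (addLeftEmbedding (a ++ c).length)) := by
    rw [Finset.disjoint_right]
    simp only [Finset.mem_map, addLeftEmbedding_apply, mem_windowStarts, List.length_append]
    omega
  have := Finset.card_le_card hsub
  rwa [Finset.card_union_of_disjoint hdisj, Finset.card_map] at this

lemma countWindows_append_le (hL : 1 ≤ L) (a c b : List α) :
    countWindows L S (a ++ c ++ b) + 1 ≤
      countWindows L S a + countWindows L S b + c.length + L := by
  have hsub : windowStarts L S (a ++ c ++ b) ⊆ windowStarts L S a ∪
      (windowStarts L S b).map (addLeftEmbedding (a ++ c).length) ∪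
      Finset.Ico (a.length + 1 - L) (a ++ c).length := by
    intro i hi
    rw [mem_windowStarts] at hi
    simp only [Finset.mem_union, Finset.mem_map, addLeftEmbedding_apply, Finset.mem_Ico,
      mem_windowStarts]
    by_cases ha : i + L ≤ a.length
    · rw [List.append_assoc, take_drop_append_of_add_le ha] at hi
      exact Or.inl (Or.inl ⟨ha, hi.2⟩)
    by_cases hb : (a ++ c).length ≤ i
    · obtain ⟨j, rfl⟩ := Nat.exists_eq_add_of_le hb
      rw [take_drop_append_add_length] at hi
      refine Or.inl (Or.inr ⟨j, ⟨?_, hi.2⟩, rfl⟩)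
      have := hi.1
      simp only [List.length_append] at this
      omega
    · simp only [List.length_append] at hi hb ⊢
      omega
  have h₁ := Finset.card_le_card hsub
  have h₂ := Finset.card_union_le (windowStarts L S a ∪
    (windowStarts L S b).map (addLeftEmbedding (a ++ c).length))
    (Finset.Ico (a.length + 1 - L) (a ++ c).length)
  have h₃ := Finset.card_union_le (windowStarts L S a)
    ((windowStarts L S b).map (addLeftEmbedding (a ++ c).length))
  rw [Finset.card_map] at h₃
  have h₄ : (a ++ c).length - (a.length + 1 - L) ≤ c.length + L - 1 := by
    rw [List.length_append]
    omega
  rw [Nat.card_Ico] at h₂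
  unfold countWindows
  omega

lemma countWindows_map {β : Type*} {S : Set (List β)} (e : α → β) (l : List α) :
    countWindows L S (l.map e) = countWindows L {u | u.map e ∈ S} l := by
  unfold countWindows
  congr 1
  ext i
  simp [mem_windowStarts, List.map_drop, List.map_take]

lemma take_drop_reverse {l : List α} {i : ℕ} (h : i + L ≤ l.length) :
    (l.reverse.drop i).take L = ((l.drop (l.length - L - i)).take L).reverse := by
  rw [List.drop_reverse, List.take_reverse, List.length_take,
    min_eq_left (by omega : l.length - i ≤ l.length), List.drop_take]
  congr 3 <;> omega

lemma countWindows_reverse (l : List α) :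
    countWindows L S l.reverse = countWindows L {u | u.reverse ∈ S} l := by
  unfold countWindows
  refine Finset.card_nbij' (fun i => l.length - L - i) (fun i => l.length - L - i)
    ?_ ?_ ?_ ?_
  · intro i hi
    rw [Finset.mem_coe, mem_windowStarts, List.length_reverse] at hi
    dsimp only
    rw [Finset.mem_coe, mem_windowStarts, Set.mem_ofPred_eq, ← take_drop_reverse hi.1]
    exact ⟨by omega, hi.2⟩
  · intro i hi
    rw [Finset.mem_coe, mem_windowStarts, Set.mem_ofPred_eq] at hi
    have hi' : l.length - L - i + L ≤ l.length := by omega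
    dsimp only
    rw [Finset.mem_coe, mem_windowStarts, List.length_reverse, take_drop_reverse hi',
      show l.length - L - (l.length - L - i) = i by omega]
    exact ⟨hi', hi.2⟩
  · intro i hi
    rw [Finset.mem_coe, mem_windowStarts, List.length_reverse] at hi
    dsimp only
    omega
  · intro i hi
    rw [Finset.mem_coe, mem_windowStarts] at hi
    dsimp only
    omega

lemma take_drop_flatten_replicate (w : List α) {n i : ℕ} (h : i + w.length ≤ n * w.length) :
    (((List.replicate n w).flatten).drop i).take w.length = w.rotate i := by
  induction n generalizing i with
  | zero =>
    obtain ⟨rfl, hw⟩ : i = 0 ∧ w.length = 0 := by simpa using h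
    simp [List.eq_nil_of_length_eq_zero hw]
  | succ n ih =>
    rw [List.replicate_succ, List.flatten_cons]
    by_cases hi : i < w.length
    · have hrest : ((List.replicate n w).flatten).take i = w.take i := by
        rcases n with _ | n
        · obtain rfl : i = 0 := by simp at h; omega
          simp
        · rw [List.replicate_succ, List.flatten_cons, List.take_append_of_le_length hi.le]
      rw [List.drop_append_of_le_length hi.le, List.take_append, List.take_of_length_le
        (by simp), List.length_drop, Nat.sub_sub_self hi.le, hrest,
        List.rotate_eq_drop_append_take hi.le]
    · obtain ⟨j, rfl⟩ := Nat.exists_eq_add_of_le (not_lt.1 hi)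
      rw [← List.drop_drop, List.drop_left, ih (by rw [Nat.succ_mul] at h; omega),
        ← List.rotate_rotate, List.rotate_length]

lemma countWindows_flatten_replicate_of_forall_mem {w : List α}
    (hS : ∀ u, u ~r w → u ∈ S) (n : ℕ) :
    countWindows w.length S (List.replicate n w).flatten = n * w.length + 1 - w.length := by
  have hlen : ((List.replicate n w).flatten).length = n * w.length := by simp
  unfold countWindows windowStarts
  rw [Finset.filter_true_of_mem, Finset.card_range, hlen]
  intro i hi
  rw [Finset.mem_range, hlen] at hi
  rw [take_drop_flatten_replicate w (by omega)]
  exact hS _ (List.IsRotated.symm ⟨i, rfl⟩)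

lemma countWindows_flatten_replicate_of_forall_not_mem {w : List α}
    (hS : ∀ u, u ~r w → u ∉ S) (n : ℕ) :
    countWindows w.length S (List.replicate n w).flatten = 0 := by
  have hlen : ((List.replicate n w).flatten).length = n * w.length := by simp
  unfold countWindows
  rw [Finset.card_eq_zero, Finset.eq_empty_iff_forall_notMem]
  intro i hi
  rw [mem_windowStarts, hlen] at hi
  rw [take_drop_flatten_replicate w hi.1] at hi
  exact hS _ (List.IsRotated.symm ⟨i, rfl⟩) hi.2

noncomputable def windowBalance (L : ℕ) (S T : Set (List α)) (l : List α) : ℝ :=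
  countWindows L S l - countWindows L T l

lemma abs_windowBalance_append_sub_le (hL : 1 ≤ L) (T : Set (List α)) (a c b : List α) :
    |windowBalance L S T (a ++ c ++ b) - windowBalance L S T a - windowBalance L S T b|
      ≤ c.length + L - 1 := by
  have hS₁ := Nat.cast_le (α := ℝ) |>.2 (countWindows_add_le_append (S := S) hL a c b)
  have hS₂ := Nat.cast_le (α := ℝ) |>.2 (countWindows_append_le (S := S) hL a c b)
  have hT₁ := Nat.cast_le (α := ℝ) |>.2 (countWindows_add_le_append (S := T) hL a c b)
  have hT₂ := Nat.cast_le (α := ℝ) |>.2 (countWindows_append_le (S := T) hL a c b)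
  push_cast at hS₁ hS₂ hT₁ hT₂
  unfold windowBalance
  rw [abs_le]
  constructor <;> linarith

end Windows

namespace Monoid.CoprodI

variable {ι : Type*} {G : ι → Type*} [∀ i, Group (G i)]

def wordProd (l : List (Σ i, G i)) : CoprodI G :=
  (l.map fun p => of p.2).prod

def IsReducedWord (l : List (Σ i, G i)) : Prop :=
  (∀ p ∈ l, p.2 ≠ 1) ∧ l.IsChain fun p q => p.1 ≠ q.1

def invLetter (p : Σ i, G i) : Σ i, G i := ⟨p.1, p.2⁻¹⟩

def wordInv (l : List (Σ i, G i)) : List (Σ i, G i) :=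
  (l.map invLetter).reverse

@[simp]
lemma wordProd_nil : wordProd ([] : List (Σ i, G i)) = 1 := rfl

@[simp]
lemma wordProd_cons (p : Σ i, G i) (l : List (Σ i, G i)) :
    wordProd (p :: l) = of p.2 * wordProd l := List.prod_cons

lemma wordProd_singleton (p : Σ i, G i) : wordProd [p] = of p.2 := by
  simp

@[simp]
lemma wordProd_append (l l' : List (Σ i, G i)) :
    wordProd (l ++ l') = wordProd l * wordProd l' := by
  simp [wordProd]

@[simp]
lemma wordProd_wordInv (l : List (Σ i, G i)) : wordProd (wordInv l) = (wordProd l)⁻¹ := by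
  induction l with
  | nil => simp [wordInv]
  | cons p l ih =>
    rw [wordInv, List.map_cons, List.reverse_cons, ← wordInv] at *
    simp [ih, invLetter]

@[simp]
lemma invLetter_invLetter (p : Σ i, G i) : invLetter (invLetter p) = p := by
  obtain ⟨i, a⟩ := p
  rw [invLetter, invLetter, inv_inv]

@[simp]
lemma wordInv_wordInv (l : List (Σ i, G i)) : wordInv (wordInv l) = l := by
  rw [wordInv, wordInv, List.map_reverse, List.reverse_reverse, List.map_map,
    show invLetter ∘ invLetter = (id : (Σ i, G i) → _) from funext invLetter_invLetter, List.map_id]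

lemma wordInv_cons (p : Σ i, G i) (l : List (Σ i, G i)) :
    wordInv (p :: l) = wordInv l ++ [invLetter p] := by
  simp [wordInv]

lemma isReducedWord_append_iff {l l' : List (Σ i, G i)} :
    IsReducedWord (l ++ l') ↔ IsReducedWord l ∧ IsReducedWord l' ∧
      ∀ p ∈ l.getLast?, ∀ q ∈ l'.head?, p.1 ≠ q.1 := by
  simp only [IsReducedWord, List.mem_append, List.isChain_append]
  grind

lemma isReducedWord_singleton_iff {p : Σ i, G i} : IsReducedWord [p] ↔ p.2 ≠ 1 := by
  simp [IsReducedWord]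

lemma IsReducedWord.of_cons {p : Σ i, G i} {l : List (Σ i, G i)} (h : IsReducedWord (p :: l)) :
    IsReducedWord l :=
  ((isReducedWord_append_iff (l := [p])).1 h).2.1

/-- In the product of two reduced words, a common piece `m` cancels and at most one pair of
letters `s`, `t` from the same factor merges into `r`. -/
lemma exists_mul_decomposition {u v : List (Σ i, G i)} (hu : IsReducedWord u)
    (hv : IsReducedWord v) :
    ∃ p m q s t r : List (Σ i, G i), s.length ≤ 1 ∧ t.length ≤ 1 ∧ r.length ≤ 1 ∧
      u = p ++ s ++ wordInv m ∧ v = m ++ t ++ q ∧ IsReducedWord (p ++ r ++ q) ∧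
      wordProd (p ++ r ++ q) = wordProd u * wordProd v := by
  induction u using List.reverseRecOn generalizing v with
  | nil => exact ⟨[], [], v, [], [], [], by simp, by simp, by simp, by simp [wordInv], by simp,
      by simpa using hv, by simp⟩
  | append_singleton u x ih =>
    obtain ⟨hu', -, hux⟩ := isReducedWord_append_iff.1 hu
    rcases v with _ | ⟨y, v⟩
    · exact ⟨u ++ [x], [], [], [], [], [], by simp, by simp, by simp, by simp [wordInv], rfl,
        by simpa using hu, by simp⟩
    obtain ⟨-, hv', hyv⟩ := (isReducedWord_append_iff (l := [y]) (l' := v)).1 hv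
    obtain ⟨i, a⟩ := x
    obtain ⟨j, b⟩ := y
    by_cases hij : i = j
    · subst hij
      by_cases hab : a * b = 1
      · obtain ⟨p, m, q, s, t, r, hs, ht, hr, rfl, rfl, hred, hprod⟩ := ih hu' hv'
        refine ⟨p, ⟨i, b⟩ :: m, q, s, t, r, hs, ht, hr, ?_, rfl, hred, ?_⟩
        · simp [wordInv_cons, invLetter, eq_inv_of_mul_eq_one_left hab]
        · simp only [hprod, wordProd_append, wordProd_cons, wordProd_nil, mul_one, mul_assoc]
          rw [← mul_assoc (of a), ← map_mul, hab, map_one, one_mul]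
      · refine ⟨u, [], v, [⟨i, a⟩], [⟨i, b⟩], [⟨i, a * b⟩], by simp, by simp, by simp,
          by simp [wordInv], rfl, ?_, ?_⟩
        · refine isReducedWord_append_iff.2 ⟨isReducedWord_append_iff.2
            ⟨hu', isReducedWord_singleton_iff.2 hab, by simpa using hux⟩, hv', ?_⟩
          simpa using hyv
        · simp [mul_assoc]
    · refine ⟨u ++ [⟨i, a⟩], [], ⟨j, b⟩ :: v, [], [], [], by simp, by simp, by simp,
        by simp [wordInv], rfl, ?_, by simp [mul_assoc]⟩
      simpa using isReducedWord_append_iff.2 ⟨hu, hv, by simpa using hij⟩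

/-- Unlike the usual convention, a single letter is not cyclically reduced: this is exactly the
condition under which all powers of `w` are reduced. -/
def IsCyclicallyReduced (w : List (Σ i, G i)) : Prop :=
  IsReducedWord w ∧ ∀ p ∈ w.getLast?, ∀ q ∈ w.head?, p.1 ≠ q.1

lemma IsCyclicallyReduced.isReducedWord_flatten_replicate {w : List (Σ i, G i)}
    (hw : IsCyclicallyReduced w) (n : ℕ) : IsReducedWord (List.replicate n w).flatten := by
  induction n with
  | zero => simp [IsReducedWord]
  | succ n ih =>
    rw [List.replicate_succ, List.flatten_cons]
    refine isReducedWord_append_iff.2 ⟨hw.1, ih, fun p hp q hq => hw.2 p hp q ?_⟩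
    rcases n with _ | n
    · simp at hq
    · rcases w with _ | ⟨r, w⟩
      · simp at hp
      · simpa [List.replicate_succ] using hq

lemma wordProd_flatten_replicate (w : List (Σ i, G i)) (n : ℕ) :
    wordProd (List.replicate n w).flatten = wordProd w ^ n := by
  induction n with
  | zero => simp
  | succ n ih => rw [List.replicate_succ, List.flatten_cons, wordProd_append, ih, pow_succ']

/-- Cyclic reduction: conjugating by the first letter shortens a word whose first and last
letters lie in the same factor. -/
lemma exists_conj_of_isReducedWord {l : List (Σ i, G i)} (hl : IsReducedWord l) :
    ∃ z w, (IsCyclicallyReduced w ∨ w.length ≤ 1) ∧ wordProd l = z * wordProd w * z⁻¹ := by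
  induction hn : l.length using Nat.strong_induction_on generalizing l with
  | _ n ih =>
  by_cases hlen : l.length ≤ 1
  · exact ⟨1, l, Or.inr hlen, by group⟩
  obtain ⟨x, mid, y, rfl⟩ : ∃ x mid y, l = x :: (mid ++ [y]) := by
    rcases l with _ | ⟨x, tl⟩
    · simp at hlen
    rcases List.eq_nil_or_concat' tl with rfl | ⟨mid, y, rfl⟩
    · simp at hlen
    exact ⟨x, mid, y, rfl⟩
  by_cases hxy : y.1 ≠ x.1
  · refine ⟨1, _, Or.inl ⟨hl, fun p hp q hq => ?_⟩, by group⟩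
    rw [← List.cons_append, List.getLast?_concat, Option.mem_some_iff] at hp
    rw [List.head?_cons, Option.mem_some_iff] at hq
    rwa [← hp, ← hq]
  obtain ⟨i, a⟩ := x
  obtain ⟨j, b⟩ := y
  obtain rfl : i = j := (not_not.1 hxy).symm
  obtain ⟨hmid, -, hjunc⟩ := isReducedWord_append_iff.1 hl.of_cons
  have hconj : wordProd (⟨i, a⟩ :: (mid ++ [⟨i, b⟩]))
      = of a * (wordProd mid * of (b * a)) * (of a)⁻¹ := by
    simp only [wordProd_cons, wordProd_append, wordProd_nil, map_mul]
    group
  have hlt : mid.length < n := by simp at hn; omega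
  by_cases hba : b * a = 1
  · obtain ⟨z, w, hw, hz⟩ := ih _ hlt hmid rfl
    exact ⟨of a * z, w, hw, by rw [hconj, hba, map_one, mul_one, hz]; group⟩
  · have hred : IsReducedWord (mid ++ [⟨i, b * a⟩]) :=
      isReducedWord_append_iff.2 ⟨hmid, isReducedWord_singleton_iff.2 hba, by simpa using hjunc⟩
    obtain ⟨z, w, hw, hz⟩ := ih _ (by simp at hn ⊢; omega) hred rfl
    refine ⟨of a * z, w, hw, ?_⟩
    rw [wordProd_append, wordProd_singleton] at hz
    rw [hconj, hz]
    group

lemma IsRotated.isConj_wordProd {u v : List (Σ i, G i)} (h : u ~r v) :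
    IsConj (wordProd u) (wordProd v) := by
  obtain ⟨k, rfl⟩ := h
  induction k generalizing u with
  | zero => rw [List.rotate_zero]
  | succ k ih =>
    rcases u with _ | ⟨p, u⟩
    · simp
    rw [List.rotate_cons_succ]
    refine IsConj.trans (isConj_iff.2 ⟨(of p.2)⁻¹, ?_⟩) (ih (u := u ++ [p]))
    simp

lemma countWindows_wordInv {L : ℕ} {S : Set (List (Σ i, G i))} (l : List (Σ i, G i)) :
    countWindows L S (wordInv l) = countWindows L {u | wordInv u ∈ S} l := by
  rw [wordInv, countWindows_reverse, countWindows_map]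
  rfl

lemma windowBalance_wordInv (w m : List (Σ i, G i)) :
    windowBalance w.length {u | u ~r w} {u | wordInv u ~r w} (wordInv m)
      = -windowBalance w.length {u | u ~r w} {u | wordInv u ~r w} m := by
  simp only [windowBalance, countWindows_wordInv, Set.mem_ofPred_eq, wordInv_wordInv]
  ring

lemma mem_commutator_of_of_mem_commutator {i : ι} {a : G i}
    (h : of a ∈ commutator (CoprodI G)) : a ∈ commutator (G i) := by
  classical
  let π : CoprodI G →* G i := (Pi.evalMonoidHom G i).comp (lift (MonoidHom.mulSingle G))
  have hπ : π (of a) = a := by simp [π]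
  have hmap := Subgroup.mem_map_of_mem π h
  rw [commutator_def, Subgroup.map_commutator, hπ] at hmap
  exact Subgroup.commutator_mono le_top le_top hmap

section NormalForm

variable [DecidableEq ι] [∀ i, DecidableEq (G i)]

noncomputable def normalForm (x : CoprodI G) : List (Σ i, G i) :=
  (Word.equiv x).toList

lemma isReducedWord_normalForm (x : CoprodI G) : IsReducedWord (normalForm x) :=
  ⟨(Word.equiv x).ne_one, (Word.equiv x).chain_ne⟩

@[simp]
lemma wordProd_normalForm (x : CoprodI G) : wordProd (normalForm x) = x :=
  Word.equiv.symm_apply_apply x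

lemma normalForm_wordProd {l : List (Σ i, G i)} (hl : IsReducedWord l) :
    normalForm (wordProd l) = l :=
  congrArg Word.toList (Word.equiv.apply_symm_apply ⟨l, hl.1, hl.2⟩)

lemma exists_normalForm_mul_decomposition (x y : CoprodI G) :
    ∃ p m q s t r : List (Σ i, G i), s.length ≤ 1 ∧ t.length ≤ 1 ∧ r.length ≤ 1 ∧
      normalForm x = p ++ s ++ wordInv m ∧ normalForm y = m ++ t ++ q ∧
      normalForm (x * y) = p ++ r ++ q := by
  obtain ⟨p, m, q, s, t, r, hs, ht, hr, hx, hy, hred, hprod⟩ :=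
    exists_mul_decomposition (isReducedWord_normalForm x) (isReducedWord_normalForm y)
  refine ⟨p, m, q, s, t, r, hs, ht, hr, hx, hy, ?_⟩
  rw [← normalForm_wordProd hred, hprod, wordProd_normalForm, wordProd_normalForm]

lemma IsCyclicallyReduced.normalForm_wordProd_pow {w : List (Σ i, G i)}
    (hw : IsCyclicallyReduced w) (n : ℕ) :
    normalForm (wordProd w ^ n) = (List.replicate n w).flatten := by
  rw [← wordProd_flatten_replicate, normalForm_wordProd (hw.isReducedWord_flatten_replicate n)]

/-- Brooks' counting quasimorphism of `w`: occurrences of cyclic conjugates of `w` minus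
occurrences of cyclic conjugates of `w⁻¹` in the normal form. -/
noncomputable def brooks (w : List (Σ i, G i)) (x : CoprodI G) : ℝ :=
  windowBalance w.length {u | u ~r w} {u | wordInv u ~r w} (normalForm x)

lemma isQuasimorphism_brooks {w : List (Σ i, G i)} (hw : w ≠ []) :
    IsQuasimorphism (brooks w) (3 * w.length) := by
  intro x y
  obtain ⟨p, m, q, s, t, r, hs, ht, hr, hx, hy, hxy⟩ := exists_normalForm_mul_decomposition x y
  have hL : 1 ≤ w.length := List.length_pos_of_ne_nil hw
  have h₁ := abs_windowBalance_append_sub_le (S := {u | u ~r w}) hL {u | wordInv u ~r w} p r q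
  have h₂ := abs_windowBalance_append_sub_le (S := {u | u ~r w}) hL {u | wordInv u ~r w}
    p s (wordInv m)
  have h₃ := abs_windowBalance_append_sub_le (S := {u | u ~r w}) hL {u | wordInv u ~r w} m t q
  rw [windowBalance_wordInv] at h₂
  have hr' : (r.length : ℝ) ≤ 1 := by exact_mod_cast hr
  have hs' : (s.length : ℝ) ≤ 1 := by exact_mod_cast hs
  have ht' : (t.length : ℝ) ≤ 1 := by exact_mod_cast ht
  simp only [brooks, hx, hy, hxy]
  rw [abs_le] at h₁ h₂ h₃ ⊢
  constructor <;> linarith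

lemma brooks_wordProd_pow {w : List (Σ i, G i)} (hw : IsCyclicallyReduced w)
    (hconj : ¬IsConj (wordProd w) (wordProd w)⁻¹) (n : ℕ) :
    brooks w (wordProd w ^ n) = (n * w.length + 1 - w.length : ℕ) := by
  rw [brooks, hw.normalForm_wordProd_pow, windowBalance,
    countWindows_flatten_replicate_of_forall_mem (S := {u | u ~r w}) (fun u hu => hu),
    countWindows_flatten_replicate_of_forall_not_mem, Nat.cast_zero, sub_zero]
  intro u hu hinv
  have h₁ := IsRotated.isConj_wordProd hu
  have h₂ := IsRotated.isConj_wordProd (u := wordInv u) hinv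
  rw [wordProd_wordInv] at h₂
  obtain ⟨c, hc⟩ := h₁
  exact hconj (h₂.symm.trans ⟨c, hc.inv_right⟩)

lemma homogenization_brooks {w : List (Σ i, G i)} (hw0 : w ≠ []) (hw : IsCyclicallyReduced w)
    (hconj : ¬IsConj (wordProd w) (wordProd w)⁻¹) :
    homogenization (brooks w) (wordProd w) = w.length := by
  refine tendsto_nhds_unique ((isQuasimorphism_brooks hw0).tendsto_homogenization _) ?_
  have hlim : Tendsto (fun n : ℕ => (w.length : ℝ) + (1 - w.length) / n) atTop
      (𝓝 w.length) := by
    simpa using tendsto_const_nhds.add (tendsto_const_div_atTop_nhds_zero_nat (1 - w.length : ℝ))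
  refine hlim.congr' ?_
  filter_upwards [eventually_ge_atTop 1] with n hn
  have hn0 : (n : ℝ) ≠ 0 := by positivity
  rw [brooks_wordProd_pow hw hconj, Nat.cast_sub (by nlinarith), Nat.cast_add, Nat.cast_mul,
    Nat.cast_one]
  field_simp
  ring

end NormalForm

lemma exists_conj_isCyclicallyReduced [∀ i, IsMulCommutative (G i)] {x : CoprodI G}
    (hx1 : x ≠ 1) (hx : x ∈ commutator (CoprodI G)) :
    ∃ z w, w ≠ [] ∧ IsCyclicallyReduced w ∧ x = z * wordProd w * z⁻¹ := by
  classical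
  obtain ⟨z, w, hw, hz⟩ := exists_conj_of_isReducedWord (isReducedWord_normalForm x)
  rw [wordProd_normalForm] at hz
  have hw0 : w ≠ [] := by
    rintro rfl
    exact hx1 (by simpa using hz)
  refine ⟨z, w, hw0, hw.resolve_right fun hlen => ?_, hz⟩
  obtain ⟨⟨i, a⟩, rfl⟩ :=
    List.length_eq_one_iff.1 (le_antisymm hlen (List.length_pos_of_ne_nil hw0))
  have hmem : of a ∈ commutator (CoprodI G) := by
    convert (Subgroup.Normal.conj_mem inferInstance) x hx z⁻¹ using 1
    rw [hz, wordProd_singleton]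
    group
  have ha := mem_commutator_of_of_mem_commutator hmem
  rw [commutator_eq_bot, Subgroup.mem_bot] at ha
  exact hx1 (by simp [hz, ha])

end Monoid.CoprodI

open Monoid.CoprodI

/-- **Gap of `1/12` in free products of cyclic groups** (single-element case of the
proposition "gap on chains of free products of cyclic groups").  Let `G = ∗_i G_i` be a
free product of cyclic groups and let `g` be a nontrivial element of the commutator
subgroup of `G` that is not conjugate to its inverse.  Then `scl_G(g) ≥ 1/12`. -/
theorem scl_ge_one_twelfth_free_product_of_cyclic {ι : Type*} (Gf : ι → Type*)
    [∀ i, Group (Gf i)] [∀ i, IsCyclic (Gf i)]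
    (g : Monoid.CoprodI Gf) (hg1 : g ≠ 1) (hg : g ∈ commutator (Monoid.CoprodI Gf))
    (hconj : ¬ ∃ x : Monoid.CoprodI Gf, x * g * x⁻¹ = g⁻¹) :
    (1 / 12 : ℝ≥0∞) ≤ scl g := by
  classical
  obtain ⟨z, w, hw0, hw, rfl⟩ := exists_conj_isCyclicallyReduced hg1 hg
  have hconj' : ¬IsConj (wordProd w) (wordProd w)⁻¹ := by
    rw [← isConj_iff] at hconj
    contrapose! hconj
    exact (isConj_iff.2 ⟨z⁻¹, by group⟩).trans (hconj.trans (isConj_iff.2 ⟨z, by group⟩))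
  have hφ := isQuasimorphism_brooks hw0
  have hψ : homogenization (brooks w) (z * wordProd w * z⁻¹) = w.length := by
    rw [hφ.homogenization_conj, homogenization_brooks hw0 hw hconj']
  have hL : (0 : ℝ) < w.length := by exact_mod_cast List.length_pos_of_ne_nil hw0
  calc (1 / 12 : ℝ≥0∞) = ENNReal.ofReal (w.length / (4 * (3 * w.length))) := by
        rw [show (w.length : ℝ) / (4 * (3 * w.length)) = 1 / 12 by field_simp; ring]
        simp
    _ ≤ scl (z * wordProd w * z⁻¹) := by
        have h := hφ.ofReal_homogenization_div_le_scl (by positivity) (z * wordProd w * z⁻¹)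
        rwa [hψ] at h
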